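/- arXiv:1103.1131 — 5 statements merged into one kernel-verified Lean document; each statement's English description precedes it below -/
import Mathlib

section
/- Under the hypotheses (EC-1)–(EC-4), the existence of an auxiliary seminorm, and the hylomorphy condition inf{ E(u)/|C(u)| : C(u) ≠ 0 } < Λ₀, there exist δ̄ > 0 and, for every δ ∈ (0, δ̄), a value e_δ ∈ ℝ and a charge value c_δ ∈ ℝ^l with c_δ ≠ 0 such that e_δ = min{ E(u) : C(u) = c_δ }, this minimum is attained, and the set Γ_δ = { u ∈ X : E(u) = e_δ, C(u) = c_δ } is nonempty, invariant under the flow γ, stable, and G-compact; consequently every u ∈ Γ_δ is a hylomorphic soliton. -/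
/-!
Fix `u₀` witnessing the hylomorphy condition and put `K = ‖C u₀‖`. Let `ℓ` be the best slope
with `ℓ ‖C‖ ≤ E` on all charges slightly above `K`; then `ℓ ≤ E u₀ / ‖C u₀‖ < Λ₀`, so by the
auxiliary seminorm a sequence whose energy/charge ratio tends to `ℓ` cannot vanish: after
translations by `G` it has a nonzero weak limit. The splitting property decomposes the sequence
into this weak limit and a remainder, and the bound `ℓ ‖C‖ ≤ E` forces the weak limit to be a
ratio minimizer (`E = ℓ ‖C‖`). Charges of minimizers are bounded away from zero, so a minimizer
`v` whose charge is less than twice their infimum cannot be split into two: every sequence with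
`E → E v` and `‖C‖ → ‖C v‖` converges after translation. This compactness makes the level set
`{E = E v, C = C v}` `G`-compact and, since `E` and `C` are conserved, stable.
-/

open Filter Topology Metric

/-- A sequence `u` in `X` is `G`-compact if there are a subsequence `u ∘ φ` and group
elements `g k` such that `g k • u (φ k)` converges. -/
def GCompactSeq {X G : Type*} [TopologicalSpace X] [Group G] [MulAction G X]
    (u : ℕ → X) : Prop :=
  ∃ φ : ℕ → ℕ, StrictMono φ ∧ ∃ g : ℕ → G, ∃ x : X,
    Tendsto (fun k => g k • u (φ k)) atTop (𝓝 x)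

/-- A set `Γ` is invariant under the flow `γ`. -/
def Invariant {X : Type*} (γ : ℝ → X → X) (Γ : Set X) : Prop :=
  ∀ u ∈ Γ, ∀ t : ℝ, γ t u ∈ Γ

/-- An invariant set `Γ` is stable. -/
def Stable {X : Type*} [MetricSpace X] (γ : ℝ → X → X) (Γ : Set X) : Prop :=
  ∀ ε > 0, ∃ δ > 0, ∀ u : X, infDist u Γ ≤ δ → ∀ t : ℝ, 0 ≤ t → infDist (γ t u) Γ ≤ ε

/-- A closed `G`-invariant set `Γ` is `G`-compact if every sequence in `Γ` is
`G`-compact. -/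
def GCompactSet {X G : Type*} [TopologicalSpace X] [Group G] [MulAction G X]
    (Γ : Set X) : Prop :=
  IsClosed Γ ∧ (∀ g : G, ∀ u ∈ Γ, g • u ∈ Γ) ∧
    ∀ u : ℕ → X, (∀ n, u n ∈ Γ) → GCompactSeq (G := G) u

/-- A state `u` is a soliton if its whole trajectory lies in a set `Γ` which is
invariant, stable and `G`-compact. -/
def IsSoliton {X G : Type*} [MetricSpace X] [Group G] [MulAction G X]
    (γ : ℝ → X → X) (u : X) : Prop :=
  ∃ Γ : Set X, (∀ t : ℝ, γ t u ∈ Γ) ∧ Invariant γ Γ ∧ Stable γ Γ ∧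
    GCompactSet (G := G) Γ

/-- A soliton `u` is hylomorphic if the set `Γ` can be taken of the form
`Γ = {v | E v = e₀ ∧ C v = c₀}` where `e₀ = min {E v | C v = c₀}`. -/
def IsHylomorphicSoliton {X G : Type*} [MetricSpace X] [Group G] [MulAction G X] {l : ℕ}
    (γ : ℝ → X → X) (E : X → ℝ) (C : X → EuclideanSpace ℝ (Fin l)) (u : X) : Prop :=
  ∃ (e₀ : ℝ) (c₀ : EuclideanSpace ℝ (Fin l)),
    (∃ w : X, C w = c₀ ∧ E w = e₀) ∧ (∀ w : X, C w = c₀ → e₀ ≤ E w) ∧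
    (∀ t : ℝ, γ t u ∈ {v : X | E v = e₀ ∧ C v = c₀}) ∧
    Invariant γ {v : X | E v = e₀ ∧ C v = c₀} ∧
    Stable γ {v : X | E v = e₀ ∧ C v = c₀} ∧
    GCompactSet (G := G) {v : X | E v = e₀ ∧ C v = c₀}

/-- A functional `F` on `X` has the splitting property if for every `u ∈ X` and every
sequence `(w n)` converging weakly to `0`, `F (u + w n) = F u + F (w n) + o(1)`. -/
def SplittingProperty {X : Type*} [NormedAddCommGroup X] [NormedSpace ℝ X]
    (F : X → ℝ) : Prop :=
  ∀ (u : X) (w : ℕ → X),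
    (∀ f : X →L[ℝ] ℝ, Tendsto (fun n => f (w n)) atTop (𝓝 0)) →
    Tendsto (fun n => F (u + w n) - F u - F (w n)) atTop (𝓝 0)

section LevelSet

variable {X G Y : Type*} [MetricSpace X] [Group G] [MulAction G X]

theorem infDist_smul_of_smul_mem [IsIsometricSMul G X] {Γ : Set X}
    (hΓ : ∀ (g : G), ∀ x ∈ Γ, g • x ∈ Γ) (g : G) (x : X) : infDist (g • x) Γ = infDist x Γ := by
  have himage : (g • ·) '' Γ = Γ := by
    ext z
    refine ⟨?_, fun hz => ⟨g⁻¹ • z, hΓ _ _ hz, smul_inv_smul g z⟩⟩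
    rintro ⟨w, hw, rfl⟩
    exact hΓ g w hw
  simpa only [himage] using infDist_image (x := x) (t := Γ) (isometry_smul X g)

variable [TopologicalSpace Y] {V : X → Y} {y : Y}

theorem gCompactSet_preimage_singleton [T1Space Y] (hV : Continuous V)
    (hVG : ∀ (g : G) (x : X), V (g • x) = V x)
    (hcpt : ∀ u : ℕ → X, Tendsto (fun n => V (u n)) atTop (𝓝 y) → GCompactSeq (G := G) u) :
    GCompactSet (G := G) (V ⁻¹' {y}) :=
  ⟨isClosed_singleton.preimage hV, fun g x hx => (hVG g x).trans hx,
    fun u hu => hcpt u (tendsto_const_nhds.congr fun n => (hu n).symm)⟩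

variable [IsIsometricSMul G X] [T2Space Y]

theorem tendsto_infDist_preimage_singleton (hV : Continuous V)
    (hVG : ∀ (g : G) (x : X), V (g • x) = V x)
    (hcpt : ∀ u : ℕ → X, Tendsto (fun n => V (u n)) atTop (𝓝 y) → GCompactSeq (G := G) u)
    {u : ℕ → X} (hu : Tendsto (fun n => V (u n)) atTop (𝓝 y)) :
    Tendsto (fun n => infDist (u n) (V ⁻¹' {y})) atTop (𝓝 0) := by
  refine tendsto_of_subseq_tendsto fun ns hns => ?_
  obtain ⟨φ, hφ, g, x, hx⟩ := hcpt (u ∘ ns) (hu.comp hns)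
  have hVx : V x = y := by
    refine tendsto_nhds_unique ((hV.tendsto x).comp hx) ?_
    simpa only [Function.comp_def, hVG] using (hu.comp hns).comp hφ.tendsto_atTop
  refine ⟨φ, squeeze_zero (fun _ => infDist_nonneg) (fun k => ?_)
    (tendsto_iff_dist_tendsto_zero.1 hx)⟩
  rw [← infDist_smul_of_smul_mem (Γ := V ⁻¹' {y}) (fun g z hz => (hVG g z).trans hz) (g k)]
  exact infDist_le_dist_of_mem hVx

theorem tendsto_of_tendsto_infDist_preimage_singleton (hV : Continuous V)
    (hVG : ∀ (g : G) (x : X), V (g • x) = V x)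
    (hcpt : ∀ u : ℕ → X, Tendsto (fun n => V (u n)) atTop (𝓝 y) → GCompactSeq (G := G) u)
    (hne : (V ⁻¹' {y}).Nonempty) {u : ℕ → X}
    (hu : Tendsto (fun n => infDist (u n) (V ⁻¹' {y})) atTop (𝓝 0)) :
    Tendsto (fun n => V (u n)) atTop (𝓝 y) := by
  choose v hvΓ hv using fun n : ℕ => (infDist_lt_iff hne).1
    (lt_add_of_pos_right (infDist (u n) (V ⁻¹' {y})) (Nat.one_div_pos_of_nat (n := n)))
  have huv : Tendsto (fun n => dist (u n) (v n)) atTop (𝓝 0) := by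
    refine squeeze_zero (fun _ => dist_nonneg) (fun n => (hv n).le) ?_
    simpa using hu.add tendsto_one_div_add_atTop_nhds_zero_nat
  refine tendsto_of_subseq_tendsto fun ns hns => ?_
  obtain ⟨φ, hφ, g, x, hx⟩ := hcpt (v ∘ ns) (tendsto_const_nhds.congr fun n => (hvΓ _).symm)
  have hVx : V x = y := (isClosed_singleton.preimage hV).mem_of_tendsto hx
    (Eventually.of_forall fun k => (hVG _ _).trans (hvΓ _))
  have hux : Tendsto (fun k => g k • u (ns (φ k))) atTop (𝓝 x) := by
    refine tendsto_iff_dist_tendsto_zero.2 (squeeze_zero (fun _ => dist_nonneg)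
      (fun k => dist_triangle _ (g k • v (ns (φ k))) x) ?_)
    simp only [dist_smul]
    simpa using ((huv.comp hns).comp hφ.tendsto_atTop).add
      (tendsto_iff_dist_tendsto_zero.1 hx)
  refine ⟨φ, ?_⟩
  simpa [Function.comp_def, hVG, hVx] using (hV.tendsto x).comp hux

theorem stable_preimage_singleton {γ : ℝ → X → X} (hV : Continuous V)
    (hVflow : ∀ (t : ℝ) (x : X), V (γ t x) = V x) (hVG : ∀ (g : G) (x : X), V (g • x) = V x)
    (hcpt : ∀ u : ℕ → X, Tendsto (fun n => V (u n)) atTop (𝓝 y) → GCompactSeq (G := G) u)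
    (hne : (V ⁻¹' {y}).Nonempty) : Stable γ (V ⁻¹' {y}) := by
  intro ε hε
  by_contra! h
  choose u hu t _ ht using fun n : ℕ => h (1 / (n + 1)) Nat.one_div_pos_of_nat
  have hdist : Tendsto (fun n => infDist (u n) (V ⁻¹' {y})) atTop (𝓝 0) :=
    squeeze_zero (fun _ => infDist_nonneg) hu tendsto_one_div_add_atTop_nhds_zero_nat
  have hflow : Tendsto (fun n => V (γ (t n) (u n))) atTop (𝓝 y) := by
    simpa only [hVflow] using tendsto_of_tendsto_infDist_preimage_singleton hV hVG hcpt hne hdist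
  obtain ⟨n, hn⟩ := ((tendsto_infDist_preimage_singleton hV hVG hcpt hflow).eventually
    (gt_mem_nhds hε)).exists
  exact (ht n).not_gt hn

end LevelSet

theorem Real.rpow_le_rpow_sub_one_mul {x T s : ℝ} (hx : 0 ≤ x) (hxT : x ≤ T) (hs : 1 ≤ s) :
    x ^ s ≤ T ^ (s - 1) * x := by
  rcases hx.eq_or_lt with rfl | hx
  · simp [Real.zero_rpow (by linarith : s ≠ 0)]
  · calc x ^ s = x ^ (s - 1) * x := by rw [Real.rpow_sub_one hx.ne', div_mul_cancel₀ _ hx.ne']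
      _ ≤ T ^ (s - 1) * x := by gcongr

theorem SplittingProperty.tendsto_sub {X : Type*} [NormedAddCommGroup X] [NormedSpace ℝ X]
    {Φ : X → ℝ} (hΦ : SplittingProperty Φ) {w : ℕ → X} {x : X} {A : ℝ}
    (hw : ∀ f : X →L[ℝ] ℝ, Tendsto (fun k => f (w k)) atTop (𝓝 (f x)))
    (hA : Tendsto (fun k => Φ (w k)) atTop (𝓝 A)) :
    Tendsto (fun k => Φ (w k - x)) atTop (𝓝 (A - Φ x)) := by
  have h := hΦ x (fun k => w k - x) fun f => by simpa using (hw f).sub_const (f x)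
  simp only [add_sub_cancel] at h
  simpa using (hA.sub_const (Φ x)).sub h

section Slopes

variable {X F : Type*} [NormedAddCommGroup F] {E : X → ℝ} {C : X → F} {K ℓ : ℝ}

/-- The margin `t > K` lets the bound `μ ‖C‖ ≤ E` pass to limits of sequences whose charge
norms converge to a value `≤ K` (see `isAsymptoticLowerSlope_sSup`). -/
def lowerSlopes (E : X → ℝ) (C : X → F) (K : ℝ) : Set ℝ :=
  {μ | ∃ t > K, ∀ v, ‖C v‖ ≤ t → μ * ‖C v‖ ≤ E v}

def IsAsymptoticLowerSlope (E : X → ℝ) (C : X → F) (K ℓ : ℝ) : Prop :=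
  ∀ (w : ℕ → X) (β : ℝ), β ≤ K → Tendsto (fun k => ‖C (w k)‖) atTop (𝓝 β) →
    ∀ b < ℓ * β, ∀ᶠ k in atTop, b < E (w k)

def ratioMinimizers (E : X → ℝ) (C : X → F) (K ℓ : ℝ) : Set X :=
  {v | C v ≠ 0 ∧ ‖C v‖ ≤ K ∧ E v = ℓ * ‖C v‖}

theorem div_mem_upperBounds_lowerSlopes {u : X} (hu : C u ≠ 0) (hK : ‖C u‖ ≤ K) :
    E u / ‖C u‖ ∈ upperBounds (lowerSlopes E C K) := by
  rintro μ ⟨t, ht, hμ⟩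
  rw [le_div_iff₀ (norm_pos_iff.2 hu)]
  exact hμ u (hK.trans ht.le)

theorem exists_lt_of_bddAbove_lowerSlopes (hbdd : BddAbove (lowerSlopes E C K)) {ε t : ℝ}
    (hε : 0 < ε) (ht : K < t) :
    ∃ v, ‖C v‖ ≤ t ∧ E v < (sSup (lowerSlopes E C K) + ε) * ‖C v‖ := by
  by_contra! h
  have hmem : sSup (lowerSlopes E C K) + ε ∈ lowerSlopes E C K := ⟨t, ht, h⟩
  linarith [le_csSup hbdd hmem]

theorem isAsymptoticLowerSlope_sSup (hne : (lowerSlopes E C K).Nonempty) :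
    IsAsymptoticLowerSlope E C K (sSup (lowerSlopes E C K)) := by
  intro w β hβK hC b hb
  have hβ : 0 ≤ β := ge_of_tendsto' hC fun _ => norm_nonneg _
  obtain ⟨μ, ⟨t, ht, hμ⟩, hbμ⟩ : ∃ μ ∈ lowerSlopes E C K, b < μ * β := by
    rcases hβ.eq_or_lt with rfl | hβ
    · obtain ⟨μ, hμ⟩ := hne
      exact ⟨μ, hμ, by simpa using hb⟩
    · obtain ⟨μ, hμ, hlt⟩ := exists_lt_of_lt_csSup hne ((div_lt_iff₀ hβ).2 hb)
      exact ⟨μ, hμ, (div_lt_iff₀ hβ).1 hlt⟩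
  filter_upwards [hC.eventually (gt_mem_nhds (hβK.trans_lt ht)),
    (hC.const_mul μ).eventually (lt_mem_nhds hbμ)] with k hk hbk
  exact hbk.trans_le (hμ _ hk.le)

theorem IsAsymptoticLowerSlope.mul_le_of_tendsto (hℓ : IsAsymptoticLowerSlope E C K ℓ)
    {w : ℕ → X} {β L : ℝ} (hβ : β ≤ K) (hC : Tendsto (fun k => ‖C (w k)‖) atTop (𝓝 β))
    (hE : Tendsto (fun k => E (w k)) atTop (𝓝 L)) : ℓ * β ≤ L :=
  le_of_forall_lt_imp_le_of_dense fun b hb =>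
    ge_of_tendsto hE ((hℓ w β hβ hC b hb).mono fun _ => le_of_lt)

theorem IsAsymptoticLowerSlope.mul_le (hℓ : IsAsymptoticLowerSlope E C K ℓ) {v : X}
    (hv : ‖C v‖ ≤ K) : ℓ * ‖C v‖ ≤ E v :=
  hℓ.mul_le_of_tendsto hv tendsto_const_nhds tendsto_const_nhds

/-- The paper's `Λ₀ = liminf_{p u → 0} E u / ‖C u‖`. -/
noncomputable def hylomorphyThreshold (E : X → ℝ) (C : X → F) (p : X → ℝ) : EReal :=
  ⨆ (r : ℝ) (_ : 0 < r), ⨅ u : {u : X // C u ≠ 0 ∧ p u < r}, ((E u.1 / ‖C u.1‖ : ℝ) : EReal)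

theorem not_tendsto_of_ratio_le {p : X → ℝ} {u : ℕ → X} {μ : ℝ}
    (hμ : (μ : EReal) < hylomorphyThreshold E C p)
    (hu : ∀ᶠ n in atTop, C (u n) ≠ 0 ∧ E (u n) / ‖C (u n)‖ ≤ μ) :
    ¬ Tendsto (fun n => p (u n)) atTop (𝓝 0) := by
  intro hp
  refine hμ.not_ge (iSup₂_le fun r hr => ?_)
  obtain ⟨n, ⟨hn0, hnμ⟩, hnr⟩ := (hu.and (hp.eventually (gt_mem_nhds hr))).exists
  exact (iInf_le _ ⟨u n, hn0, hnr⟩).trans (EReal.coe_le_coe_iff.2 hnμ)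

end Slopes

section Vanishing

variable {X F G : Type*} [NormedAddCommGroup X] [NormedSpace ℝ X] [NormedAddCommGroup F]
  [Group G] [MulAction G X] {E : X → ℝ} {C : X → F}

def IsAuxiliarySeminorm (G : Type*) [Group G] [MulAction G X] (p : Seminorm ℝ X) : Prop :=
  ∀ u : ℕ → X, (∃ R : ℝ, ∀ n, ‖u n‖ ≤ R) → (∃ δ' > 0, ∀ n, δ' ≤ p (u n)) →
    ∃ φ : ℕ → ℕ, StrictMono φ ∧ ∃ g : ℕ → G, ∃ ubar : X, ubar ≠ 0 ∧
      ∀ f : X →L[ℝ] ℝ, Tendsto (fun k => f (g k • u (φ k))) atTop (𝓝 (f ubar))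

namespace IsAuxiliarySeminorm

variable {p : Seminorm ℝ X} {u : ℕ → X} {μ : ℝ}

theorem exists_tendsto_weak_ne_zero (hp : IsAuxiliarySeminorm G p)
    (hμ : (μ : EReal) < hylomorphyThreshold E C p) (hbdd : ∃ R : ℝ, ∀ n, ‖u n‖ ≤ R)
    (hu : ∀ᶠ n in atTop, C (u n) ≠ 0 ∧ E (u n) / ‖C (u n)‖ ≤ μ) :
    ∃ φ : ℕ → ℕ, StrictMono φ ∧ ∃ (g : ℕ → G) (v : X), v ≠ 0 ∧
      ∀ f : X →L[ℝ] ℝ, Tendsto (fun k => f (g k • u (φ k))) atTop (𝓝 (f v)) := by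
  obtain ⟨ε, hε, hfreq⟩ : ∃ ε > 0, ∃ᶠ n in atTop, ε ≤ p (u n) := by
    by_contra! h
    exact not_tendsto_of_ratio_le hμ hu
      (tendsto_order.2 ⟨fun b hb => .of_forall fun n => hb.trans_le (apply_nonneg p _), h⟩)
  obtain ⟨φ₁, hφ₁, hε₁⟩ := extraction_of_frequently_atTop hfreq
  obtain ⟨R, hR⟩ := hbdd
  obtain ⟨φ₂, hφ₂, g, v, hv, hw⟩ := hp (u ∘ φ₁) ⟨R, fun k => hR _⟩ ⟨ε, hε, hε₁⟩
  exact ⟨φ₁ ∘ φ₂, hφ₁.comp hφ₂, g, v, hv, hw⟩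

theorem not_tendsto_zero (hp : IsAuxiliarySeminorm G p)
    (hnorm : ∀ (g : G) (x : X), ‖g • x‖ = ‖x‖) (hμ : (μ : EReal) < hylomorphyThreshold E C p)
    (hu : ∀ᶠ n in atTop, C (u n) ≠ 0 ∧ E (u n) / ‖C (u n)‖ ≤ μ) :
    ¬ Tendsto u atTop (𝓝 0) := by
  intro h0
  obtain ⟨R, hR⟩ := isBounded_iff_forall_norm_le.1 (isBounded_range_of_tendsto u h0)
  obtain ⟨φ, hφ, g, v, hv, hw⟩ :=
    hp.exists_tendsto_weak_ne_zero hμ ⟨R, fun n => hR _ (Set.mem_range_self n)⟩ hu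
  have hg0 : Tendsto (fun k => g k • u (φ k)) atTop (𝓝 0) := by
    rw [tendsto_zero_iff_norm_tendsto_zero]
    simpa [Function.comp_def, hnorm] using
      (tendsto_zero_iff_norm_tendsto_zero.1 h0).comp hφ.tendsto_atTop
  refine hv (SeparatingDual.eq_zero_of_forall_dual_eq_zero (R := ℝ) fun f => ?_)
  exact tendsto_nhds_unique (hw f)
    (by simpa [Function.comp_def] using (f.continuous.tendsto 0).comp hg0)

end IsAuxiliarySeminorm

end Vanishing

section EnergyCharge

variable {X F G : Type*} [NormedAddCommGroup X] [NormedSpace ℝ X] [NormedAddCommGroup F]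
  [Group G] [MulAction G X]

/-- The hypotheses (EC-2)–(EC-4), with `G` acting by norm-preserving maps. -/
structure IsEnergyCharge (G : Type*) [Group G] [MulAction G X] (E : X → ℝ) (C : X → F)
    (a s : ℝ) : Prop where
  norm_smul : ∀ (g : G) (x : X), ‖g • x‖ = ‖x‖
  energy_smul : ∀ (g : G) (u : X), E (g • u) = E u
  charge_smul : ∀ (g : G) (u : X), C (g • u) = C u
  coeff_nonneg : 0 ≤ a
  one_le_exponent : 1 ≤ s
  coercive_nonneg : ∀ u : X, 0 ≤ E u + a * ‖C u‖ ^ s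
  coercive_atTop : ∀ u : ℕ → X, Tendsto (fun n => ‖u n‖) atTop atTop →
    Tendsto (fun n => E (u n) + a * ‖C (u n)‖ ^ s) atTop atTop
  coercive_zero : ∀ u : ℕ → X,
    Tendsto (fun n => E (u n) + a * ‖C (u n)‖ ^ s) atTop (𝓝 0) → Tendsto u atTop (𝓝 0)
  splitting_energy : SplittingProperty E
  splitting_charge : SplittingProperty fun u => ‖C u‖

namespace IsEnergyCharge

variable {E : X → ℝ} {C : X → F} {a s K ℓ : ℝ} {p : Seminorm ℝ X} {u : ℕ → X}

theorem exponent_pos (H : IsEnergyCharge G E C a s) : 0 < s :=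
  zero_lt_one.trans_le H.one_le_exponent

theorem energy_nonneg_of_charge_eq_zero (H : IsEnergyCharge G E C a s) {v : X}
    (hv : C v = 0) : 0 ≤ E v := by
  simpa [hv, Real.zero_rpow H.exponent_pos.ne'] using H.coercive_nonneg v

theorem tendsto_coercive (H : IsEnergyCharge G E C a s) {A σ : ℝ}
    (hE : Tendsto (fun n => E (u n)) atTop (𝓝 A))
    (hC : Tendsto (fun n => ‖C (u n)‖) atTop (𝓝 σ)) :
    Tendsto (fun n => E (u n) + a * ‖C (u n)‖ ^ s) atTop (𝓝 (A + a * σ ^ s)) :=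
  hE.add (((Real.continuousAt_rpow_const σ s
    (Or.inr H.exponent_pos.le)).tendsto.comp hC).const_mul a)

theorem bounded_of_tendsto (H : IsEnergyCharge G E C a s) {A σ : ℝ}
    (hE : Tendsto (fun n => E (u n)) atTop (𝓝 A))
    (hC : Tendsto (fun n => ‖C (u n)‖) atTop (𝓝 σ)) : ∃ R : ℝ, ∀ n, ‖u n‖ ≤ R := by
  by_contra! h
  choose n hn using fun k : ℕ => h k
  obtain ⟨R, hR⟩ := (H.tendsto_coercive hE hC).bddAbove_range
  obtain ⟨k, hk⟩ := ((H.coercive_atTop (u ∘ n) (tendsto_atTop_mono (fun k => (hn k).le)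
    tendsto_natCast_atTop_atTop)).eventually_gt_atTop R).exists
  exact hk.not_ge (hR (Set.mem_range_self (n k)))

theorem tendsto_zero_of_tendsto (H : IsEnergyCharge G E C a s)
    (hE : Tendsto (fun n => E (u n)) atTop (𝓝 0))
    (hC : Tendsto (fun n => ‖C (u n)‖) atTop (𝓝 0)) : Tendsto u atTop (𝓝 0) :=
  H.coercive_zero u (by
    simpa [Real.zero_rpow H.exponent_pos.ne'] using H.tendsto_coercive hE hC)

theorem lowerSlopes_nonempty (H : IsEnergyCharge G E C a s) :
    (lowerSlopes E C K).Nonempty := by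
  refine ⟨-(a * (K + 1) ^ (s - 1)), K + 1, lt_add_one K, fun v hv => ?_⟩
  have hpow := Real.rpow_le_rpow_sub_one_mul (norm_nonneg (C v)) hv H.one_le_exponent
  nlinarith [H.coercive_nonneg v, mul_le_mul_of_nonneg_left hpow H.coeff_nonneg]

theorem exists_split (H : IsEnergyCharge G E C a s) (hp : IsAuxiliarySeminorm G p)
    (hℓ : IsAsymptoticLowerSlope E C K ℓ) (hsub : (ℓ : EReal) < hylomorphyThreshold E C p)
    {σ : ℝ} (hσ : 0 < σ) (hσK : σ ≤ K) (hE : Tendsto (fun n => E (u n)) atTop (𝓝 (ℓ * σ)))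
    (hC : Tendsto (fun n => ‖C (u n)‖) atTop (𝓝 σ)) :
    ∃ φ : ℕ → ℕ, StrictMono φ ∧ ∃ (g : ℕ → G) (v : X), v ∈ ratioMinimizers E C K ℓ ∧
      ‖C v‖ ≤ σ ∧
      Tendsto (fun k => E (g k • u (φ k) - v)) atTop (𝓝 (ℓ * (σ - ‖C v‖))) ∧
      Tendsto (fun k => ‖C (g k • u (φ k) - v)‖) atTop (𝓝 (σ - ‖C v‖)) := by
  obtain ⟨μ, hℓμ, hμ⟩ := EReal.lt_iff_exists_real_btwn.1 hsub
  have hratio : Tendsto (fun n => E (u n) / ‖C (u n)‖) atTop (𝓝 ℓ) := by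
    have h := hE.div hC hσ.ne'
    rwa [mul_div_cancel_right₀ _ hσ.ne'] at h
  have hu : ∀ᶠ n in atTop, C (u n) ≠ 0 ∧ E (u n) / ‖C (u n)‖ ≤ μ :=
    ((hC.eventually (lt_mem_nhds hσ)).mono fun _ => norm_pos_iff.1).and
      (hratio.eventually (ge_mem_nhds (EReal.coe_lt_coe_iff.1 hℓμ)))
  obtain ⟨φ, hφ, g, v, hv, hw⟩ := hp.exists_tendsto_weak_ne_zero hμ (H.bounded_of_tendsto hE hC) hu
  have hEr := H.splitting_energy.tendsto_sub hw (A := ℓ * σ)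
    (by simpa [Function.comp_def, H.energy_smul] using hE.comp hφ.tendsto_atTop)
  have hCr := H.splitting_charge.tendsto_sub hw (A := σ)
    (by simpa [Function.comp_def, H.charge_smul] using hC.comp hφ.tendsto_atTop)
  have hCv : ‖C v‖ ≤ σ := sub_nonneg.1 (ge_of_tendsto' hCr fun _ => norm_nonneg _)
  have hEv : E v = ℓ * ‖C v‖ := by
    have hrest := hℓ.mul_le_of_tendsto (by linarith [norm_nonneg (C v)]) hCr hEr
    linarith [hℓ.mul_le (hCv.trans hσK)]
  have hCv0 : C v ≠ 0 := fun h0 => hv <| tendsto_nhds_unique tendsto_const_nhds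
    (H.tendsto_zero_of_tendsto (u := fun _ => v) (by simp [hEv, h0]) (by simp [h0]))
  refine ⟨φ, hφ, g, v, ⟨hCv0, hCv.trans hσK, hEv⟩, hCv, ?_, hCr⟩
  convert hEr using 2
  rw [hEv]
  ring

theorem ratioMinimizers_nonempty (H : IsEnergyCharge G E C a s) (hp : IsAuxiliarySeminorm G p)
    (hbdd : BddAbove (lowerSlopes E C K))
    (hsub : ((sSup (lowerSlopes E C K) : ℝ) : EReal) < hylomorphyThreshold E C p) :
    (ratioMinimizers E C K (sSup (lowerSlopes E C K))).Nonempty := by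
  set ℓ := sSup (lowerSlopes E C K)
  have hℓ : IsAsymptoticLowerSlope E C K ℓ := isAsymptoticLowerSlope_sSup H.lowerSlopes_nonempty
  obtain ⟨μ, hℓμ, hμ⟩ := EReal.lt_iff_exists_real_btwn.1 hsub
  choose v hvK hvE using fun n : ℕ => exists_lt_of_bddAbove_lowerSlopes hbdd
    (Nat.one_div_pos_of_nat (n := n)) (lt_add_of_pos_right K (Nat.one_div_pos_of_nat (n := n)))
  have hv0 : ∀ n, C (v n) ≠ 0 := fun n h0 =>
    (hvE n).not_ge (by simpa [h0] using H.energy_nonneg_of_charge_eq_zero h0)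
  have hvK' : ∀ n, ‖C (v n)‖ ∈ Set.Icc 0 (K + 1) := fun n =>
    ⟨norm_nonneg _, (hvK n).trans (by gcongr; exact (div_le_one (by positivity)).2 (by simp))⟩
  obtain ⟨σ, hσ, φ, hφ, hC⟩ := isCompact_Icc.tendsto_subseq hvK'
  have hεφ : Tendsto (fun k => 1 / ((φ k : ℝ) + 1)) atTop (𝓝 0) :=
    tendsto_one_div_add_atTop_nhds_zero_nat.comp hφ.tendsto_atTop
  have hσK : σ ≤ K := le_of_tendsto_of_tendsto' hC
    (by simpa using tendsto_const_nhds.add hεφ) fun k => hvK (φ k)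
  have hE : Tendsto (fun k => E (v (φ k))) atTop (𝓝 (ℓ * σ)) := by
    have hup : Tendsto (fun k => (ℓ + 1 / ((φ k : ℝ) + 1)) * ‖C (v (φ k))‖) atTop
        (𝓝 (ℓ * σ)) := by
      simpa using (tendsto_const_nhds.add hεφ).mul hC
    exact tendsto_order.2 ⟨hℓ _ σ hσK hC,
      fun c hc => (hup.eventually (gt_mem_nhds hc)).mono fun k hk => (hvE _).trans hk⟩
  rcases hσ.1.eq_or_lt with rfl | hσ0
  · refine absurd (H.tendsto_zero_of_tendsto (by simpa using hE) hC)
      (hp.not_tendsto_zero H.norm_smul hμ ?_)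
    filter_upwards [hεφ.eventually (gt_mem_nhds (sub_pos.2 (EReal.coe_lt_coe_iff.1 hℓμ)))]
      with k hk
    refine ⟨hv0 _, (div_le_iff₀ (norm_pos_iff.2 (hv0 _))).2 ?_⟩
    nlinarith [hvE (φ k), norm_nonneg (C (v (φ k)))]
  · obtain ⟨-, -, -, w, hw, -⟩ := H.exists_split hp hℓ hsub hσ0 hσK hE hC
    exact ⟨w, hw⟩

theorem exists_pos_le_norm_charge (H : IsEnergyCharge G E C a s) (hp : IsAuxiliarySeminorm G p)
    (hsub : (ℓ : EReal) < hylomorphyThreshold E C p) :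
    ∃ ε > 0, ∀ w ∈ ratioMinimizers E C K ℓ, ε ≤ ‖C w‖ := by
  by_contra! h
  choose w hwM hw using fun n : ℕ => h (1 / (n + 1)) Nat.one_div_pos_of_nat
  have hC : Tendsto (fun n => ‖C (w n)‖) atTop (𝓝 0) := squeeze_zero (fun _ => norm_nonneg _)
    (fun n => (hw n).le) tendsto_one_div_add_atTop_nhds_zero_nat
  have hE : Tendsto (fun n => E (w n)) atTop (𝓝 0) := by
    simpa [(hwM _).2.2] using hC.const_mul ℓ
  refine hp.not_tendsto_zero H.norm_smul hsub (Eventually.of_forall fun n => ⟨(hwM n).1, ?_⟩)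
    (H.tendsto_zero_of_tendsto hE hC)
  rw [(hwM n).2.2, mul_div_cancel_right₀ _ (norm_ne_zero_iff.2 (hwM n).1)]

theorem exists_ratioMinimizer_lt_add (H : IsEnergyCharge G E C a s)
    (hp : IsAuxiliarySeminorm G p) (hsub : (ℓ : EReal) < hylomorphyThreshold E C p)
    (hne : (ratioMinimizers E C K ℓ).Nonempty) :
    ∃ v ∈ ratioMinimizers E C K ℓ, ∀ w₁ ∈ ratioMinimizers E C K ℓ,
      ∀ w₂ ∈ ratioMinimizers E C K ℓ, ‖C v‖ < ‖C w₁‖ + ‖C w₂‖ := by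
  obtain ⟨ε, hε, hεle⟩ := H.exists_pos_le_norm_charge hp hsub (K := K)
  set charges := (fun w => ‖C w‖) '' ratioMinimizers E C K ℓ
  have hbdd : BddBelow charges := ⟨0, by rintro _ ⟨w, -, rfl⟩; exact norm_nonneg _⟩
  have hεm : ε ≤ sInf charges := le_csInf (hne.image _) (by rintro _ ⟨w, hw, rfl⟩; exact hεle w hw)
  obtain ⟨_, ⟨v, hv, rfl⟩, hvm⟩ :=
    exists_lt_of_csInf_lt (hne.image _) (by linarith : sInf charges < 2 * sInf charges)
  refine ⟨v, hv, fun w₁ hw₁ w₂ hw₂ => ?_⟩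
  linarith [csInf_le hbdd ⟨w₁, hw₁, rfl⟩, csInf_le hbdd ⟨w₂, hw₂, rfl⟩]

theorem gCompactSeq_of_tendsto (H : IsEnergyCharge G E C a s) (hp : IsAuxiliarySeminorm G p)
    (hℓ : IsAsymptoticLowerSlope E C K ℓ) (hsub : (ℓ : EReal) < hylomorphyThreshold E C p)
    {v : X} (hv : v ∈ ratioMinimizers E C K ℓ)
    (hvlt : ∀ w₁ ∈ ratioMinimizers E C K ℓ, ∀ w₂ ∈ ratioMinimizers E C K ℓ,
      ‖C v‖ < ‖C w₁‖ + ‖C w₂‖)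
    (hE : Tendsto (fun n => E (u n)) atTop (𝓝 (E v)))
    (hC : Tendsto (fun n => ‖C (u n)‖) atTop (𝓝 ‖C v‖)) : GCompactSeq (G := G) u := by
  rw [hv.2.2] at hE
  obtain ⟨φ, hφ, g, w, hw, hwv, hEr, hCr⟩ :=
    H.exists_split hp hℓ hsub (norm_pos_iff.2 hv.1) hv.2.1 hE hC
  rcases (sub_nonneg.2 hwv).eq_or_lt with hβ | hβ
  · rw [← hβ] at hEr hCr
    refine ⟨φ, hφ, g, w, ?_⟩
    simpa using (H.tendsto_zero_of_tendsto (by simpa using hEr) hCr).add_const w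
  · obtain ⟨-, -, -, w₂, hw₂, hw₂le, -⟩ :=
      H.exists_split hp hℓ hsub hβ (by linarith [norm_nonneg (C w), hv.2.1]) hEr hCr
    linarith [hvlt w hw w₂ hw₂]

theorem exists_minimizer (H : IsEnergyCharge G E C a s) (hp : IsAuxiliarySeminorm G p)
    (hhylo : (⨅ u : {u : X // C u ≠ 0}, ((E u.1 / ‖C u.1‖ : ℝ) : EReal)) <
      hylomorphyThreshold E C p) :
    ∃ v, C v ≠ 0 ∧ (∀ w, C w = C v → E v ≤ E w) ∧
      ∀ u : ℕ → X, Tendsto (fun n => E (u n)) atTop (𝓝 (E v)) →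
        Tendsto (fun n => ‖C (u n)‖) atTop (𝓝 ‖C v‖) → GCompactSeq (G := G) u := by
  obtain ⟨⟨u₀, hu₀⟩, hlt⟩ := iInf_lt_iff.1 hhylo
  have hub := div_mem_upperBounds_lowerSlopes (E := E) hu₀ le_rfl
  have hℓ := isAsymptoticLowerSlope_sSup (H.lowerSlopes_nonempty (K := ‖C u₀‖))
  have hsub : ((sSup (lowerSlopes E C ‖C u₀‖) : ℝ) : EReal) < hylomorphyThreshold E C p :=
    (EReal.coe_le_coe_iff.2 (csSup_le H.lowerSlopes_nonempty hub)).trans_lt hlt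
  obtain ⟨v, hv, hvlt⟩ :=
    H.exists_ratioMinimizer_lt_add hp hsub (H.ratioMinimizers_nonempty hp ⟨_, hub⟩ hsub)
  refine ⟨v, hv.1, fun w hw => ?_, fun u => H.gCompactSeq_of_tendsto hp hℓ hsub hv hvlt⟩
  rw [hv.2.2, ← hw]
  exact hℓ.mul_le (hw ▸ hv.2.1)

end IsEnergyCharge

end EnergyCharge

theorem existence_of_hylomorphic_solitons_general {X G : Type*}
    [NormedAddCommGroup X] [NormedSpace ℝ X] [CompleteSpace X]
    [Group G] [MulAction G X] {l : ℕ}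
    -- G is a group of linear isometries of X
    (hGlin : ∀ g : G, IsLinearMap ℝ (fun x : X => g • x))
    (hGnorm : ∀ (g : G) (x : X), ‖g • x‖ = ‖x‖)
    -- the dynamical system (X, γ)
    (γ : ℝ → X → X)
    -- (EC-1): E, C are continuous integrals of motion vanishing at 0
    (E : X → ℝ) (C : X → EuclideanSpace ℝ (Fin l))
    (hEcont : Continuous E) (hCcont : Continuous C)
    (hEflow : ∀ (t : ℝ) (u : X), E (γ t u) = E u)
    (hCflow : ∀ (t : ℝ) (u : X), C (γ t u) = C u)
    -- (EC-2): E and C are G-invariant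
    (hEG : ∀ (g : G) (u : X), E (g • u) = E u)
    (hCG : ∀ (g : G) (u : X), C (g • u) = C u)
    -- (EC-3): coercivity
    (a s : ℝ) (ha : 0 ≤ a) (hs : 1 ≤ s)
    (hcoer₁ : ∀ u : X, 0 ≤ E u + a * ‖C u‖ ^ s)
    (hcoer₂ : ∀ u : ℕ → X, Tendsto (fun n => ‖u n‖) atTop atTop →
      Tendsto (fun n => E (u n) + a * ‖C (u n)‖ ^ s) atTop atTop)
    (hcoer₃ : ∀ u : ℕ → X,
      Tendsto (fun n => E (u n) + a * ‖C (u n)‖ ^ s) atTop (𝓝 0) →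
      Tendsto u atTop (𝓝 0))
    -- (EC-4): splitting property
    (hEsplit : SplittingProperty E)
    (hCsplit : SplittingProperty (fun u => ‖C u‖))
    -- the auxiliary seminorm
    (p : Seminorm ℝ X)
    (haux : ∀ u : ℕ → X, (∃ R : ℝ, ∀ n, ‖u n‖ ≤ R) →
      (∃ δ' > 0, ∀ n, δ' ≤ p (u n)) →
      ∃ φ : ℕ → ℕ, StrictMono φ ∧ ∃ g : ℕ → G, ∃ ubar : X, ubar ≠ 0 ∧
        ∀ f : X →L[ℝ] ℝ,
          Tendsto (fun k => f (g k • u (φ k))) atTop (𝓝 (f ubar)))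
    -- Λ₀ and the hylomorphy condition
    (Λ₀ : EReal)
    (hΛ₀ : Λ₀ = ⨆ (r : ℝ) (_ : 0 < r),
      ⨅ u : {u : X // C u ≠ 0 ∧ p u < r}, ((E u.1 / ‖C u.1‖ : ℝ) : EReal))
    (hhylo : (⨅ u : {u : X // C u ≠ 0}, ((E u.1 / ‖C u.1‖ : ℝ) : EReal)) < Λ₀) :
    ∃ δbar : ℝ, 0 < δbar ∧ ∀ δ : ℝ, 0 < δ → δ < δbar →
      ∃ (eδ : ℝ) (cδ : EuclideanSpace ℝ (Fin l)), cδ ≠ 0 ∧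
        (∃ u : X, C u = cδ ∧ E u = eδ) ∧
        (∀ u : X, C u = cδ → eδ ≤ E u) ∧
        {u : X | E u = eδ ∧ C u = cδ}.Nonempty ∧
        Invariant γ {u : X | E u = eδ ∧ C u = cδ} ∧
        Stable γ {u : X | E u = eδ ∧ C u = cδ} ∧
        GCompactSet (G := G) {u : X | E u = eδ ∧ C u = cδ} ∧
        ∀ u ∈ {u : X | E u = eδ ∧ C u = cδ},
          IsHylomorphicSoliton (G := G) γ E C u := by
  have : IsIsometricSMul G X :=
    ⟨fun g => AddMonoidHomClass.isometry_of_norm ((hGlin g).mk' _) (hGnorm g)⟩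
  have H : IsEnergyCharge G E C a s :=
    ⟨hGnorm, hEG, hCG, ha, hs, hcoer₁, hcoer₂, hcoer₃, hEsplit, hCsplit⟩
  obtain ⟨v, hv0, hmin, hcpt⟩ := H.exists_minimizer haux (by rwa [hΛ₀] at hhylo)
  set V : X → ℝ × EuclideanSpace ℝ (Fin l) := fun u => (E u, C u)
  have hVc : Continuous V := hEcont.prodMk hCcont
  have hVG : ∀ (g : G) (u : X), V (g • u) = V u := fun g u => by simp [V, hEG, hCG]
  have hVflow : ∀ (t : ℝ) (u : X), V (γ t u) = V u := fun t u => by simp [V, hEflow, hCflow]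
  have hVcpt : ∀ u : ℕ → X, Tendsto (fun n => V (u n)) atTop (𝓝 (V v)) →
      GCompactSeq (G := G) u := fun u hu =>
    hcpt u ((continuous_fst.tendsto _).comp hu)
      (((continuous_norm.comp continuous_snd).tendsto _).comp hu)
  have hΓ : V ⁻¹' {V v} = {u : X | E u = E v ∧ C u = C v} := by ext; simp [V]
  have hinv : Invariant γ (V ⁻¹' {V v}) := fun u hu t => (hVflow t u).trans hu
  have hstab := stable_preimage_singleton hVc hVflow hVG hVcpt ⟨v, rfl⟩
  have hgc := gCompactSet_preimage_singleton hVc hVG hVcpt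
  rw [hΓ] at hinv hstab hgc
  refine ⟨1, one_pos, fun _ _ _ => ⟨E v, C v, hv0, ⟨v, rfl, rfl⟩, hmin, ⟨v, rfl, rfl⟩, hinv,
    hstab, hgc, fun u hu => ⟨E v, C v, ⟨v, rfl, rfl⟩, hmin, fun t => hinv u hu t, hinv, hstab,
    hgc⟩⟩⟩

/-- Theorem `astra1`: Under (EC-1)–(EC-4), the existence of an auxiliary
seminorm, and the hylomorphy condition `inf {E u / |C u| : C u ≠ 0} < Λ₀`, there exist
`δ̄ > 0` and, for every `δ ∈ (0, δ̄)`, a value `e_δ ∈ ℝ` and a charge `c_δ ≠ 0` such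
that `e_δ = min {E u | C u = c_δ}` is attained and the set
`Γ_δ = {u | E u = e_δ ∧ C u = c_δ}` is nonempty, invariant, stable and `G`-compact;
consequently every `u ∈ Γ_δ` is a hylomorphic soliton. -/
theorem existence_of_hylomorphic_solitons {X G : Type*}
    [NormedAddCommGroup X] [NormedSpace ℝ X] [CompleteSpace X]
    [Group G] [MulAction G X] {l : ℕ}
    -- G is a group of linear isometries of X
    (hGlin : ∀ g : G, IsLinearMap ℝ (fun x : X => g • x))
    (hGnorm : ∀ (g : G) (x : X), ‖g • x‖ = ‖x‖)
    -- the dynamical system (X, γ)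
    (γ : ℝ → X → X)
    (hγ0 : ∀ u : X, γ 0 u = u)
    (hγadd : ∀ (t s : ℝ) (u : X), γ (t + s) u = γ t (γ s u))
    -- (EC-1): E, C are continuous integrals of motion vanishing at 0
    (E : X → ℝ) (C : X → EuclideanSpace ℝ (Fin l)) (hl : 1 ≤ l)
    (hEcont : Continuous E) (hCcont : Continuous C)
    (hEflow : ∀ (t : ℝ) (u : X), E (γ t u) = E u)
    (hCflow : ∀ (t : ℝ) (u : X), C (γ t u) = C u)
    (hE0 : E 0 = 0) (hC0 : C 0 = 0)
    -- (EC-2): E and C are G-invariant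
    (hEG : ∀ (g : G) (u : X), E (g • u) = E u)
    (hCG : ∀ (g : G) (u : X), C (g • u) = C u)
    -- (EC-3): coercivity
    (a s : ℝ) (ha : 0 ≤ a) (hs : 1 ≤ s)
    (hcoer₁ : ∀ u : X, 0 ≤ E u + a * ‖C u‖ ^ s)
    (hcoer₂ : ∀ u : ℕ → X, Tendsto (fun n => ‖u n‖) atTop atTop →
      Tendsto (fun n => E (u n) + a * ‖C (u n)‖ ^ s) atTop atTop)
    (hcoer₃ : ∀ u : ℕ → X,
      Tendsto (fun n => E (u n) + a * ‖C (u n)‖ ^ s) atTop (𝓝 0) →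
      Tendsto u atTop (𝓝 0))
    -- (EC-4): splitting property
    (hEsplit : SplittingProperty E)
    (hCsplit : SplittingProperty (fun u => ‖C u‖))
    -- the auxiliary seminorm
    (p : Seminorm ℝ X)
    (haux : ∀ u : ℕ → X, (∃ R : ℝ, ∀ n, ‖u n‖ ≤ R) →
      (∃ δ' > 0, ∀ n, δ' ≤ p (u n)) →
      ∃ φ : ℕ → ℕ, StrictMono φ ∧ ∃ g : ℕ → G, ∃ ubar : X, ubar ≠ 0 ∧
        ∀ f : X →L[ℝ] ℝ,
          Tendsto (fun k => f (g k • u (φ k))) atTop (𝓝 (f ubar)))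
    -- Λ₀ and the hylomorphy condition
    (Λ₀ : EReal)
    (hΛ₀ : Λ₀ = ⨆ (r : ℝ) (_ : 0 < r),
      ⨅ u : {u : X // C u ≠ 0 ∧ p u < r}, ((E u.1 / ‖C u.1‖ : ℝ) : EReal))
    (hhylo : (⨅ u : {u : X // C u ≠ 0}, ((E u.1 / ‖C u.1‖ : ℝ) : EReal)) < Λ₀) :
    ∃ δbar : ℝ, 0 < δbar ∧ ∀ δ : ℝ, 0 < δ → δ < δbar →
      ∃ (eδ : ℝ) (cδ : EuclideanSpace ℝ (Fin l)), cδ ≠ 0 ∧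
        (∃ u : X, C u = cδ ∧ E u = eδ) ∧
        (∀ u : X, C u = cδ → eδ ≤ E u) ∧
        {u : X | E u = eδ ∧ C u = cδ}.Nonempty ∧
        Invariant γ {u : X | E u = eδ ∧ C u = cδ} ∧
        Stable γ {u : X | E u = eδ ∧ C u = cδ} ∧
        GCompactSet (G := G) {u : X | E u = eδ ∧ C u = cδ} ∧
        ∀ u ∈ {u : X | E u = eδ ∧ C u = cδ},
          IsHylomorphicSoliton (G := G) γ E C u :=
  existence_of_hylomorphic_solitons_general hGlin hGnorm γ E C hEcont hCcont hEflow hCflow hEG hCG a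
    s ha hs hcoer₁ hcoer₂ hcoer₃ hEsplit hCsplit p haux Λ₀ hΛ₀ hhylo
end

section
/- Let E : X → ℝ and C : X → ℝ^l be continuous, G-invariant integrals of motion of the dynamical system (X,γ) (i.e. E(γ_t u) = E(u) and C(γ_t u) = C(u) for all t and u). Fix e₀ ∈ ℝ and c₀ ∈ ℝ^l and set V(u) = (E(u) − e₀)² + |C(u) − c₀|². If every sequence (u_n) with V(u_n) → 0 is G-compact and the set Γ = { u ∈ X : E(u) = e₀, C(u) = c₀ } is nonempty, then Γ is invariant, stable, and G-compact; in particular every u ∈ Γ is a soliton. -/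
open Filter Topology Metric

/-!
`Γ` is the zero set of the continuous, `G`-invariant, conserved function `V`, so it is closed,
invariant and (by hypothesis) `G`-compact. For stability, `infDist (u n) Γ → 0` and
`V (u n) → 0` are equivalent: along any subsequence, `G`-compactness (of `Γ`, resp. of sequences
with `V → 0`) moves a further subsequence by group elements onto a convergent sequence whose
limit lies in `Γ`, and both `V` and `infDist · Γ` are unchanged by the group. Since `V` is
conserved by the flow, `infDist (u n) Γ → 0` therefore implies `infDist (γ (t n) (u n)) Γ → 0`
for any times `t n`, which is stability.
-/

open scoped Pointwise

theorem sq_add_norm_sq_eq_zero_iff {F : Type*} [NormedAddCommGroup F] {a : ℝ} {v : F} :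
    a ^ 2 + ‖v‖ ^ 2 = 0 ↔ a = 0 ∧ v = 0 := by
  rw [add_eq_zero_iff_of_nonneg (sq_nonneg _) (sq_nonneg _)]
  simp

theorem exists_seq_mem_tendsto_dist_of_tendsto_infDist {X : Type*} [PseudoMetricSpace X]
    {s : Set X} (hs : s.Nonempty) {u : ℕ → X}
    (hu : Tendsto (fun n => infDist (u n) s) atTop (𝓝 0)) :
    ∃ v : ℕ → X, (∀ n, v n ∈ s) ∧ Tendsto (fun n => dist (u n) (v n)) atTop (𝓝 0) := by
  have hnear : ∀ n : ℕ, ∃ y ∈ s, dist (u n) y < infDist (u n) s + 1 / (n + 1) := fun n =>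
    (infDist_lt_iff hs).1 (lt_add_of_pos_right _ Nat.one_div_pos_of_nat)
  choose v hvs hv using hnear
  refine ⟨v, hvs, squeeze_zero (fun _ => dist_nonneg) (fun n => (hv n).le) ?_⟩
  simpa using hu.add tendsto_one_div_add_atTop_nhds_zero_nat

theorem stable_of_tendsto_infDist {X : Type*} [MetricSpace X] {γ : ℝ → X → X} {Γ : Set X}
    (h : ∀ (u : ℕ → X) (t : ℕ → ℝ), (∀ n, 0 ≤ t n) →
      Tendsto (fun n => infDist (u n) Γ) atTop (𝓝 0) →
      Tendsto (fun n => infDist (γ (t n) (u n)) Γ) atTop (𝓝 0)) :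
    Stable γ Γ := by
  intro ε hε
  by_contra! hbad
  choose u hu t ht hfar using fun n : ℕ => hbad (1 / (n + 1)) Nat.one_div_pos_of_nat
  have hu0 : Tendsto (fun n => infDist (u n) Γ) atTop (𝓝 0) :=
    squeeze_zero (fun _ => infDist_nonneg) hu tendsto_one_div_add_atTop_nhds_zero_nat
  obtain ⟨n, hn⟩ := ((h u t ht hu0).eventually (gt_mem_nhds hε)).exists
  exact (hfar n).not_gt hn

theorem isSoliton_of_mem {X G : Type*} [MetricSpace X] [Group G] [MulAction G X]
    {γ : ℝ → X → X} {Γ : Set X} (hinv : Invariant γ Γ) (hstab : Stable γ Γ)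
    (hcpt : GCompactSet (G := G) Γ) {u : X} (hu : u ∈ Γ) :
    IsSoliton (G := G) γ u :=
  ⟨Γ, hinv u hu, hinv, hstab, hcpt⟩

theorem infDist_smul_of_smul_set_eq {X G : Type*} [PseudoMetricSpace X] [Group G]
    [MulAction G X] {g : G} (hg : Isometry (fun x : X => g • x)) {s : Set X} (hs : g • s = s)
    (x : X) : infDist (g • x) s = infDist x s := by
  conv_lhs => rw [← hs, ← Set.image_smul]
  exact infDist_image hg

theorem smul_preimage_eq {X G α : Type*} [Group G] [MulAction G X] {V : X → α}
    (hVG : ∀ (g : G) (u : X), V (g • u) = V u) (g : G) (s : Set α) :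
    g • V ⁻¹' s = V ⁻¹' s := by
  ext x
  simp [Set.mem_smul_set_iff_inv_smul_mem, hVG]

section ZeroSet

variable {X G : Type*} [MetricSpace X] [Group G] [MulAction G X] {V : X → ℝ}

theorem gCompactSet_preimage_zero (hVc : Continuous V) (hVG : ∀ (g : G) (u : X), V (g • u) = V u)
    (hGc : ∀ u : ℕ → X, (∀ n, V (u n) = 0) → GCompactSeq (G := G) u) :
    GCompactSet (G := G) (V ⁻¹' {0}) :=
  ⟨isClosed_singleton.preimage hVc, fun g u hu => by simpa [hVG] using hu, hGc⟩

theorem tendsto_infDist_preimage_zero_of_tendsto (hiso : ∀ g : G, Isometry (fun x : X => g • x))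
    (hVc : Continuous V) (hVG : ∀ (g : G) (u : X), V (g • u) = V u)
    (hGc : ∀ u : ℕ → X, Tendsto (fun n => V (u n)) atTop (𝓝 0) → GCompactSeq (G := G) u)
    {u : ℕ → X} (hu : Tendsto (fun n => V (u n)) atTop (𝓝 0)) :
    Tendsto (fun n => infDist (u n) (V ⁻¹' {0})) atTop (𝓝 0) := by
  refine tendsto_of_subseq_tendsto fun ns hns => ?_
  obtain ⟨φ, hφ, g, x, hx⟩ := hGc (u ∘ ns) (hu.comp hns)
  have hVx : V x = 0 := tendsto_nhds_unique ((hVc.tendsto x).comp hx) <| by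
    simpa [Function.comp_def, hVG] using hu.comp (hns.comp hφ.tendsto_atTop)
  refine ⟨φ, ?_⟩
  have hlim := ((continuous_infDist_pt (V ⁻¹' {0})).tendsto x).comp hx
  rw [infDist_zero_of_mem (show x ∈ V ⁻¹' {0} from hVx)] at hlim
  simpa [Function.comp_def,
    infDist_smul_of_smul_set_eq (hiso _) (smul_preimage_eq hVG _ _)] using hlim

theorem tendsto_zero_of_tendsto_dist_preimage_zero (hiso : ∀ g : G, Isometry (fun x : X => g • x))
    (hVc : Continuous V) (hVG : ∀ (g : G) (u : X), V (g • u) = V u)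
    (hGc : ∀ v : ℕ → X, (∀ n, V (v n) = 0) → GCompactSeq (G := G) v)
    {u v : ℕ → X} (hv : ∀ n, V (v n) = 0)
    (huv : Tendsto (fun n => dist (u n) (v n)) atTop (𝓝 0)) :
    Tendsto (fun n => V (u n)) atTop (𝓝 0) := by
  refine tendsto_of_subseq_tendsto fun ns hns => ?_
  obtain ⟨φ, hφ, g, x, hx⟩ := hGc (v ∘ ns) (fun n => hv (ns n))
  have hVx : V x = 0 := tendsto_nhds_unique ((hVc.tendsto x).comp hx) <| by
    simp [Function.comp_def, hVG, hv]
  have hdist : Tendsto (fun k => dist (g k • v (ns (φ k))) (g k • u (ns (φ k))))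
      atTop (𝓝 0) := by
    simpa [Function.comp_def, (hiso _).dist_eq, dist_comm] using
      huv.comp (hns.comp hφ.tendsto_atTop)
  have hux := tendsto_of_tendsto_of_dist hx hdist
  refine ⟨φ, ?_⟩
  simpa [Function.comp_def, hVx, hVG] using (hVc.tendsto x).comp hux

theorem stable_preimage_zero (hiso : ∀ g : G, Isometry (fun x : X => g • x))
    {γ : ℝ → X → X} (hVc : Continuous V) (hVG : ∀ (g : G) (u : X), V (g • u) = V u)
    (hVflow : ∀ (t : ℝ) (u : X), V (γ t u) = V u)
    (hGc : ∀ u : ℕ → X, Tendsto (fun n => V (u n)) atTop (𝓝 0) → GCompactSeq (G := G) u)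
    (hne : (V ⁻¹' {0}).Nonempty) :
    Stable γ (V ⁻¹' {0}) := by
  refine stable_of_tendsto_infDist fun u t _ hu => ?_
  obtain ⟨v, hv, huv⟩ := exists_seq_mem_tendsto_dist_of_tendsto_infDist hne hu
  have hVu := tendsto_zero_of_tendsto_dist_preimage_zero hiso hVc hVG
    (fun w hw => hGc w (by simp [hw])) hv huv
  exact tendsto_infDist_preimage_zero_of_tendsto hiso hVc hVG hGc (by simpa [hVflow] using hVu)

end ZeroSet

theorem level_set_is_stable_invariant_GCompact_general {X G : Type*} [MetricSpace X]
    [Group G] [MulAction G X] {l : ℕ}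
    (hiso : ∀ g : G, Isometry (fun x : X => g • x))
    (γ : ℝ → X → X)
    (E : X → ℝ) (C : X → EuclideanSpace ℝ (Fin l))
    (hEcont : Continuous E) (hCcont : Continuous C)
    (hEflow : ∀ (t : ℝ) (u : X), E (γ t u) = E u)
    (hCflow : ∀ (t : ℝ) (u : X), C (γ t u) = C u)
    (hEG : ∀ (g : G) (u : X), E (g • u) = E u)
    (hCG : ∀ (g : G) (u : X), C (g • u) = C u)
    (e₀ : ℝ) (c₀ : EuclideanSpace ℝ (Fin l))
    (V : X → ℝ) (hV : ∀ u : X, V u = (E u - e₀) ^ 2 + ‖C u - c₀‖ ^ 2)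
    (hGc : ∀ u : ℕ → X, Tendsto (fun n => V (u n)) atTop (𝓝 0) →
      GCompactSeq (G := G) u)
    (Γ : Set X) (hΓ : Γ = {u : X | E u = e₀ ∧ C u = c₀}) (hΓne : Γ.Nonempty) :
    Invariant γ Γ ∧ Stable γ Γ ∧ GCompactSet (G := G) Γ ∧
      ∀ u ∈ Γ, IsSoliton (G := G) γ u := by
  have hVc : Continuous V := by
    rw [funext hV]
    fun_prop
  have hVflow : ∀ (t : ℝ) (u : X), V (γ t u) = V u := by simp [hV, hEflow, hCflow]
  have hVG : ∀ (g : G) (u : X), V (g • u) = V u := by simp [hV, hEG, hCG]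
  obtain rfl : Γ = V ⁻¹' {0} := by
    ext u
    simp [hΓ, hV, sq_add_norm_sq_eq_zero_iff, sub_eq_zero]
  have hinv : Invariant γ (V ⁻¹' {0}) := fun u hu t => by simpa [hVflow] using hu
  have hstab := stable_preimage_zero hiso hVc hVG hVflow hGc hΓne
  have hcpt := gCompactSet_preimage_zero hVc hVG fun u hu => hGc u (by simp [hu])
  exact ⟨hinv, hstab, hcpt, fun u hu => isSoliton_of_mem hinv hstab hcpt hu⟩

/-- Theorem `astraco`: Let `E, C` be continuous `G`-invariant integrals of
motion of `(X, γ)`, fix `e₀, c₀`, and set `V u = (E u - e₀)² + |C u - c₀|²`.  If every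
sequence `(u n)` with `V (u n) → 0` is `G`-compact and
`Γ = {u | E u = e₀ ∧ C u = c₀}` is nonempty, then `Γ` is invariant, stable and
`G`-compact; in particular every `u ∈ Γ` is a soliton. -/
theorem level_set_is_stable_invariant_GCompact {X G : Type*} [MetricSpace X]
    [Group G] [MulAction G X] {l : ℕ}
    (hiso : ∀ g : G, Isometry (fun x : X => g • x))
    (γ : ℝ → X → X)
    (hγ0 : ∀ u : X, γ 0 u = u)
    (hγadd : ∀ (t s : ℝ) (u : X), γ (t + s) u = γ t (γ s u))
    (E : X → ℝ) (C : X → EuclideanSpace ℝ (Fin l))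
    (hEcont : Continuous E) (hCcont : Continuous C)
    (hEflow : ∀ (t : ℝ) (u : X), E (γ t u) = E u)
    (hCflow : ∀ (t : ℝ) (u : X), C (γ t u) = C u)
    (hEG : ∀ (g : G) (u : X), E (g • u) = E u)
    (hCG : ∀ (g : G) (u : X), C (g • u) = C u)
    (e₀ : ℝ) (c₀ : EuclideanSpace ℝ (Fin l))
    (V : X → ℝ) (hV : ∀ u : X, V u = (E u - e₀) ^ 2 + ‖C u - c₀‖ ^ 2)
    (hGc : ∀ u : ℕ → X, Tendsto (fun n => V (u n)) atTop (𝓝 0) →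
      GCompactSeq (G := G) u)
    (Γ : Set X) (hΓ : Γ = {u : X | E u = e₀ ∧ C u = c₀}) (hΓne : Γ.Nonempty) :
    Invariant γ Γ ∧ Stable γ Γ ∧ GCompactSet (G := G) Γ ∧
      ∀ u ∈ Γ, IsSoliton (G := G) γ u :=
  level_set_is_stable_invariant_GCompact_general hiso γ E C hEcont hCcont hEflow hCflow hEG hCG e₀
    c₀ V hV hGc Γ hΓ hΓne
end

section
/- Let (X,d) be a metric space, G a group acting on X by isometries, and V : X → ℝ a continuous, nonnegative, G-invariant function whose zero set Γ = { u ∈ X : V(u) = 0 } is nonempty. Assume that every sequence (u_n) with V(u_n) → 0 is G-compact. Then for every sequence (u_n) in X: V(u_n) → 0 if and only if d(u_n, Γ) → 0. -/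
open Filter Topology Metric

/-!
Both directions go through the subsequence principle. If `V (u n) → 0`, `G`-compactness
and the continuity and invariance of `V` give translates `g k • u (φ k)` converging to a
point `x` of `Γ`; as `Γ` is `G`-invariant and `G` acts by isometries, `d(u (φ k), Γ)` is
at most `d(g k • u (φ k), x) → 0`. Conversely, if `d(u n, Γ) → 0`, pick `γ n ∈ Γ` with
`d(u n, γ n) → 0`; the sequence `γ` is `G`-compact, and the same translates of `u` converge
to the same limit `x ∈ Γ`, so `V (u n) = V (g • u n) → V x = 0` along a subsequence.
-/

lemma exists_seq_mem_tendsto_dist_zero {X : Type*} [PseudoMetricSpace X] {s : Set X}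
    (hs : s.Nonempty) {u : ℕ → X} (hu : Tendsto (fun n => infDist (u n) s) atTop (𝓝 0)) :
    ∃ γ : ℕ → X, (∀ n, γ n ∈ s) ∧ Tendsto (fun n => dist (u n) (γ n)) atTop (𝓝 0) := by
  have hclose : ∀ n : ℕ, ∃ y ∈ s, dist (u n) y < infDist (u n) s + 1 / (n + 1) := fun n =>
    (infDist_lt_iff hs).1 (lt_add_of_pos_right _ Nat.one_div_pos_of_nat)
  choose γ hγs hγ using hclose
  refine ⟨γ, hγs, squeeze_zero (fun _ => dist_nonneg) (fun n => (hγ n).le) ?_⟩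
  simpa using hu.add tendsto_one_div_add_atTop_nhds_zero_nat

lemma infDist_le_dist_smul {X G : Type*} [PseudoMetricSpace X] [Group G] [MulAction G X]
    {g : G} (hg : Isometry fun x : X => g • x) {s : Set X} {y : X} (hy : g⁻¹ • y ∈ s)
    (u : X) : infDist u s ≤ dist (g • u) y :=
  calc infDist u s ≤ dist u (g⁻¹ • y) := infDist_le_dist_of_mem hy
    _ = dist (g • u) y := by rw [← hg.dist_eq, smul_inv_smul]

section InvariantFunction

variable {X G : Type*} [MetricSpace X] [Group G] [MulAction G X] {V : X → ℝ}

lemma GCompactSeq.exists_smul_tendsto_of_tendsto_zero (hVcont : Continuous V)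
    (hVinv : ∀ (g : G) (u : X), V (g • u) = V u) {u : ℕ → X} (hu : GCompactSeq (G := G) u)
    (hV : Tendsto (fun n => V (u n)) atTop (𝓝 0)) :
    ∃ φ : ℕ → ℕ, StrictMono φ ∧ ∃ g : ℕ → G, ∃ x : X, V x = 0 ∧
      Tendsto (fun k => g k • u (φ k)) atTop (𝓝 x) := by
  obtain ⟨φ, hφ, g, x, hx⟩ := hu
  have hVφ : Tendsto (fun k => V (g k • u (φ k))) atTop (𝓝 0) := by
    simpa only [hVinv, Function.comp_def] using hV.comp hφ.tendsto_atTop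
  exact ⟨φ, hφ, g, x, tendsto_nhds_unique ((hVcont.tendsto x).comp hx) hVφ, hx⟩

lemma tendsto_infDist_zeroSet_of_tendsto (hiso : ∀ g : G, Isometry (fun x : X => g • x))
    (hVcont : Continuous V) (hVinv : ∀ (g : G) (u : X), V (g • u) = V u)
    (hGc : ∀ u : ℕ → X, Tendsto (fun n => V (u n)) atTop (𝓝 0) → GCompactSeq (G := G) u)
    {u : ℕ → X} (hV : Tendsto (fun n => V (u n)) atTop (𝓝 0)) :
    Tendsto (fun n => infDist (u n) {x | V x = 0}) atTop (𝓝 0) := by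
  refine tendsto_of_subseq_tendsto fun ns hns => ?_
  have hVns : Tendsto (fun n => V (u (ns n))) atTop (𝓝 0) := hV.comp hns
  obtain ⟨φ, -, g, x, hx0, hx⟩ :=
    (hGc _ hVns).exists_smul_tendsto_of_tendsto_zero hVcont hVinv hVns
  have hmem : ∀ k, (g k)⁻¹ • x ∈ {x | V x = 0} := fun k => by simp [hVinv, hx0]
  exact ⟨φ, squeeze_zero (fun _ => infDist_nonneg)
    (fun k => infDist_le_dist_smul (hiso (g k)) (hmem k) _)
    (tendsto_iff_dist_tendsto_zero.1 hx)⟩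

lemma tendsto_of_tendsto_infDist_zeroSet (hiso : ∀ g : G, Isometry (fun x : X => g • x))
    (hVcont : Continuous V) (hVinv : ∀ (g : G) (u : X), V (g • u) = V u)
    (hGc : ∀ u : ℕ → X, Tendsto (fun n => V (u n)) atTop (𝓝 0) → GCompactSeq (G := G) u)
    (hne : {x | V x = 0}.Nonempty) {u : ℕ → X}
    (hd : Tendsto (fun n => infDist (u n) {x | V x = 0}) atTop (𝓝 0)) :
    Tendsto (fun n => V (u n)) atTop (𝓝 0) := by
  obtain ⟨γ, hγ0, hγu⟩ := exists_seq_mem_tendsto_dist_zero hne hd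
  refine tendsto_of_subseq_tendsto fun ns hns => ?_
  have hVns : Tendsto (fun n => V (γ (ns n))) atTop (𝓝 0) :=
    tendsto_const_nhds.congr fun n => (hγ0 (ns n)).symm
  obtain ⟨φ, hφ, g, x, hx0, hγx⟩ :=
    (hGc _ hVns).exists_smul_tendsto_of_tendsto_zero hVcont hVinv hVns
  have hux : Tendsto (fun k => g k • u (ns (φ k))) atTop (𝓝 x) := by
    refine hγx.congr_dist ?_
    simpa only [(hiso _).dist_eq, dist_comm (γ _), Function.comp_def] using
      hγu.comp (hns.comp hφ.tendsto_atTop)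
  refine ⟨φ, ?_⟩
  simpa only [hVinv, hx0, Function.comp_def] using (hVcont.tendsto x).comp hux

end InvariantFunction

theorem vanishing_iff_dist_tendsto_zero_general {X G : Type*} [MetricSpace X]
    [Group G] [MulAction G X]
    (hiso : ∀ g : G, Isometry (fun x : X => g • x))
    (V : X → ℝ) (hVcont : Continuous V)
    (hVinv : ∀ (g : G) (u : X), V (g • u) = V u)
    (Γ : Set X) (hΓ : Γ = {u : X | V u = 0}) (hΓne : Γ.Nonempty)
    (hGc : ∀ u : ℕ → X, Tendsto (fun n => V (u n)) atTop (𝓝 0) →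
      GCompactSeq (G := G) u) :
    ∀ u : ℕ → X,
      Tendsto (fun n => V (u n)) atTop (𝓝 0) ↔
        Tendsto (fun n => infDist (u n) Γ) atTop (𝓝 0) := by
  subst hΓ
  exact fun u => ⟨tendsto_infDist_zeroSet_of_tendsto hiso hVcont hVinv hGc,
    tendsto_of_tendsto_infDist_zeroSet hiso hVcont hVinv hGc hΓne⟩

/-- Let `(X,d)` be a metric space, `G` a group acting on `X` by isometries,
and `V : X → ℝ` a continuous, nonnegative, `G`-invariant function whose zero set
`Γ = {u | V u = 0}` is nonempty.  Assume every sequence `(u n)` with `V (u n) → 0` is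
`G`-compact.  Then for every sequence `(u n)` in `X`:
`V (u n) → 0` if and only if `d(u n, Γ) → 0`. -/
theorem vanishing_iff_dist_tendsto_zero {X G : Type*} [MetricSpace X]
    [Group G] [MulAction G X]
    (hiso : ∀ g : G, Isometry (fun x : X => g • x))
    (V : X → ℝ) (hVcont : Continuous V) (hVnonneg : ∀ u : X, 0 ≤ V u)
    (hVinv : ∀ (g : G) (u : X), V (g • u) = V u)
    (Γ : Set X) (hΓ : Γ = {u : X | V u = 0}) (hΓne : Γ.Nonempty)
    (hGc : ∀ u : ℕ → X, Tendsto (fun n => V (u n)) atTop (𝓝 0) →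
      GCompactSeq (G := G) u) :
    ∀ u : ℕ → X,
      Tendsto (fun n => V (u n)) atTop (𝓝 0) ↔
        Tendsto (fun n => infDist (u n) Γ) atTop (𝓝 0) :=
  vanishing_iff_dist_tendsto_zero_general hiso V hVcont hVinv Γ hΓ hΓne hGc
end

section
/- Let X be a normed space, E : X → ℝ and C : X → ℝ^l functionals such that E and u ↦ |C(u)| have the splitting property, let a ≥ 0 and s ≥ 1, and set Φ(u) = E(u) + 2a|C(u)|^s. Then for every ū ∈ X and every sequence (w_n) converging weakly to 0 such that lim_n E(w_n) and lim_n |C(w_n)| exist, the limit lim_n Φ(w_n) exists and liminf_n Φ(ū + w_n) ≥ Φ(ū) + lim_n Φ(w_n). -/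
/-!
Along a weakly null sequence the splitting property turns convergence of `E (w n)` and
`‖C (w n)‖` into convergence of `E (ubar + w n)` and `‖C (ubar + w n)‖` to `E ubar + e` and
`‖C ubar‖ + c`. Hence `Φ (ubar + w n)` converges, and the inequality reduces to the
superadditivity `x ^ s + y ^ s ≤ (x + y) ^ s` of `t ↦ t ^ s` on `[0, ∞)` for `s ≥ 1`.
-/

open Filter Topology

theorem SplittingProperty.tendsto_add {X : Type*} [NormedAddCommGroup X] [NormedSpace ℝ X]
    {F : X → ℝ} (hF : SplittingProperty F) (u : X) {w : ℕ → X}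
    (hw : ∀ f : X →L[ℝ] ℝ, Tendsto (fun n => f (w n)) atTop (𝓝 0)) {c : ℝ}
    (hc : Tendsto (fun n => F (w n)) atTop (𝓝 c)) :
    Tendsto (fun n => F (u + w n)) atTop (𝓝 (F u + c)) := by
  simpa using ((hF u w hw).add hc).const_add (F u)

/-- If `E` and `u ↦ |C u|` have the splitting property, `a ≥ 0`, `s ≥ 1`,
and `Φ u = E u + 2 a |C u|^s`, then for every `ubar` and every sequence `(w n)` weakly
converging to `0` such that `lim E (w n)` and `lim |C (w n)|` exist, `lim Φ (w n)`
exists and `liminf Φ (ubar + w n) ≥ Φ ubar + lim Φ (w n)`. -/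
theorem Phi_superadditive_splitting {X : Type*} [NormedAddCommGroup X] [NormedSpace ℝ X]
    {l : ℕ} (E : X → ℝ) (C : X → EuclideanSpace ℝ (Fin l))
    (a s : ℝ) (ha : 0 ≤ a) (hs : 1 ≤ s)
    (hE : SplittingProperty E) (hC : SplittingProperty (fun u => ‖C u‖))
    (Φ : X → ℝ) (hΦ : ∀ u : X, Φ u = E u + 2 * a * ‖C u‖ ^ s) :
    ∀ (ubar : X) (w : ℕ → X),
      (∀ f : X →L[ℝ] ℝ, Tendsto (fun n => f (w n)) atTop (𝓝 0)) →
      (∃ e₁ : ℝ, Tendsto (fun n => E (w n)) atTop (𝓝 e₁)) →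
      (∃ c₁ : ℝ, Tendsto (fun n => ‖C (w n)‖) atTop (𝓝 c₁)) →
      ∃ L : ℝ, Tendsto (fun n => Φ (w n)) atTop (𝓝 L) ∧
        Φ ubar + L ≤ liminf (fun n => Φ (ubar + w n)) atTop := by
  rintro ubar w hw ⟨e₁, he₁⟩ ⟨c₁, hc₁⟩
  have tendsto_Φ : ∀ {v : ℕ → X} {e c : ℝ}, Tendsto (fun n => E (v n)) atTop (𝓝 e) →
      Tendsto (fun n => ‖C (v n)‖) atTop (𝓝 c) →
      Tendsto (fun n => Φ (v n)) atTop (𝓝 (e + 2 * a * c ^ s)) := fun hEv hCv => by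
    simpa only [hΦ] using hEv.add ((hCv.rpow_const (Or.inr (by linarith))).const_mul (2 * a))
  refine ⟨_, tendsto_Φ he₁ hc₁, ?_⟩
  rw [(tendsto_Φ (hE.tendsto_add ubar hw he₁) (hC.tendsto_add ubar hw hc₁)).liminf_eq, hΦ]
  have hc₁_nonneg : 0 ≤ c₁ := ge_of_tendsto' hc₁ fun n => norm_nonneg _
  have superadd := mul_le_mul_of_nonneg_left
    (Real.add_rpow_le_rpow_add (norm_nonneg (C ubar)) hc₁_nonneg hs) (by positivity : 0 ≤ 2 * a)
  linarith
end

section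
/- Let X be a Banach space, E : X → ℝ and C : X → ℝ^l functionals, a ≥ 0, s ≥ 1 with E(u) + a|C(u)|^s ≥ 0 for all u and E(u_n) + a|C(u_n)|^s → ∞ whenever ‖u_n‖ → ∞, let ‖·‖_♯ be a seminorm on X, let δ > 0 and let J_δ(u) = E(u)/|C(u)| + δ(E(u) + 2a|C(u)|^s) on { u : C(u) ≠ 0 }, with j = inf J_δ finite. Assume there exist η > 0 and r > 0 such that E(u)/|C(u)| ≥ j + η for every u with C(u) ≠ 0 and ‖u‖_♯ < r. Then every minimizing sequence (u_n) of J_δ is bounded in X and satisfies ‖u_n‖_♯ ≥ r for all sufficiently large n. -/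
/-!
Along a minimizing sequence `J_δ (u n)` is bounded above. Since `E ≥ -a |C|^s`, the
quotient `E / |C|` is at least `-a |C|^(s-1)`, and `a t^(s-1) (1 - δ t) ≤ a δ⁻¹^(s-1)` for
all `t ≥ 0` because `s ≥ 1`; hence the coercive quantity `E + a |C|^s` stays bounded along
the sequence, which by coercivity bounds `‖u n‖`. The penalty `δ (E + 2a |C|^s)` is
nonnegative, so `E (u n) / |C (u n)| ≤ J_δ (u n) < j + η` eventually, which rules out
`‖u n‖_♯ < r`.
-/

open Filter Topology

lemma mul_rpow_sub_one_mul_one_sub_le {a s δ t : ℝ} (ha : 0 ≤ a) (hs : 1 ≤ s) (hδ : 0 < δ)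
    (ht : 0 ≤ t) : a * t ^ (s - 1) * (1 - δ * t) ≤ a * δ⁻¹ ^ (s - 1) := by
  have hpow : 0 ≤ a * t ^ (s - 1) := mul_nonneg ha (Real.rpow_nonneg ht _)
  rcases le_or_gt 1 (δ * t) with hlarge | hsmall
  · have hnonpos : a * t ^ (s - 1) * (1 - δ * t) ≤ 0 :=
      mul_nonpos_of_nonneg_of_nonpos hpow (by linarith)
    exact hnonpos.trans (mul_nonneg ha (Real.rpow_nonneg (inv_nonneg.2 hδ.le) _))
  · have ht_le : t ≤ δ⁻¹ := by rw [inv_eq_one_div, le_div_iff₀' hδ]; linarith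
    calc a * t ^ (s - 1) * (1 - δ * t) ≤ a * t ^ (s - 1) :=
          mul_le_of_le_one_right hpow (by nlinarith [mul_nonneg hδ.le ht])
      _ ≤ a * δ⁻¹ ^ (s - 1) :=
          mul_le_mul_of_nonneg_left (Real.rpow_le_rpow ht ht_le (by linarith)) ha

lemma neg_mul_rpow_sub_one_le_div {e a s t : ℝ} (ht : 0 < t) (he : 0 ≤ e + a * t ^ s) :
    -(a * t ^ (s - 1)) ≤ e / t := by
  rw [Real.rpow_sub_one ht.ne', ← mul_div_assoc, ← neg_div]
  exact div_le_div_of_nonneg_right (by linarith) ht.le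

lemma mul_add_rpow_le {e a s δ t : ℝ} (ha : 0 ≤ a) (hs : 1 ≤ s) (hδ : 0 < δ)
    (ht : 0 < t) (he : 0 ≤ e + a * t ^ s) :
    δ * (e + a * t ^ s) ≤ e / t + δ * (e + 2 * a * t ^ s) + a * δ⁻¹ ^ (s - 1) := by
  have hquot := neg_mul_rpow_sub_one_le_div ht he
  have hgap := mul_rpow_sub_one_mul_one_sub_le ha hs hδ ht.le
  have hsplit : t ^ s = t ^ (s - 1) * t := by
    rw [Real.rpow_sub_one ht.ne', div_mul_cancel₀ _ ht.ne']
  rw [hsplit]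
  linear_combination hquot + hgap

lemma add_two_mul_rpow_nonneg {e a s t : ℝ} (ha : 0 ≤ a) (ht : 0 ≤ t)
    (he : 0 ≤ e + a * t ^ s) : 0 ≤ e + 2 * a * t ^ s := by
  nlinarith [mul_nonneg ha (Real.rpow_nonneg ht s)]

lemma exists_norm_le_of_coercive_of_le {X : Type*} [Norm X] {Q : X → ℝ}
    (hQ : ∀ u : ℕ → X, Tendsto (fun n => ‖u n‖) atTop atTop →
      Tendsto (fun n => Q (u n)) atTop atTop)
    {u : ℕ → X} {M : ℝ} (hM : ∀ n, Q (u n) ≤ M) :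
    ∃ R : ℝ, ∀ n, ‖u n‖ ≤ R := by
  by_contra! hunbdd
  choose g hg using fun k : ℕ => hunbdd k
  have hnorm : Tendsto (fun k => ‖u (g k)‖) atTop atTop :=
    tendsto_atTop_mono (fun k => (hg k).le) tendsto_natCast_atTop_atTop
  obtain ⟨k, hk⟩ := ((hQ _ hnorm).eventually_gt_atTop M).exists
  exact (hM (g k)).not_gt hk

theorem minimizing_seq_bounded_and_sharp_norm_below_general {X : Type*}
    [NormedAddCommGroup X] [NormedSpace ℝ X] {l : ℕ}
    (E : X → ℝ) (C : X → EuclideanSpace ℝ (Fin l))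
    (a s : ℝ) (ha : 0 ≤ a) (hs : 1 ≤ s)
    (hcoer₁ : ∀ u : X, 0 ≤ E u + a * ‖C u‖ ^ s)
    (hcoer₂ : ∀ u : ℕ → X, Tendsto (fun n => ‖u n‖) atTop atTop →
      Tendsto (fun n => E (u n) + a * ‖C (u n)‖ ^ s) atTop atTop)
    (p : Seminorm ℝ X) (δ : ℝ) (hδ : 0 < δ)
    (J : X → ℝ)
    (hJ : ∀ u : X, J u = E u / ‖C u‖ + δ * (E u + 2 * a * ‖C u‖ ^ s))
    (j : ℝ)
    (η r : ℝ) (hη : 0 < η)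
    (hbelow : ∀ u : X, C u ≠ 0 → p u < r → j + η ≤ E u / ‖C u‖) :
    ∀ u : ℕ → X, (∀ n, C (u n) ≠ 0) → Tendsto (fun n => J (u n)) atTop (𝓝 j) →
      (∃ R : ℝ, ∀ n, ‖u n‖ ≤ R) ∧ (∀ᶠ n in atTop, r ≤ p (u n)) := by
  intro u hC hJu
  constructor
  · obtain ⟨M, hM⟩ := hJu.bddAbove_range
    refine exists_norm_le_of_coercive_of_le hcoer₂
      (Q := fun v => E v + a * ‖C v‖ ^ s) (M := (M + a * δ⁻¹ ^ (s - 1)) / δ) fun n => ?_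
    have hJn : J (u n) ≤ M := hM ⟨n, rfl⟩
    rw [hJ] at hJn
    rw [le_div_iff₀' hδ]
    linarith [mul_add_rpow_le ha hs hδ (norm_pos_iff.2 (hC n)) (hcoer₁ (u n))]
  · filter_upwards [hJu.eventually_lt_const (lt_add_of_pos_right j hη)] with n hJn
    by_contra! hp
    have hpenalty := add_two_mul_rpow_nonneg ha (norm_nonneg _) (hcoer₁ (u n))
    rw [hJ] at hJn
    linarith [hbelow (u n) (hC n) hp, mul_nonneg hδ.le hpenalty]

/-- With `E u + a |C u|^s ≥ 0` (coercivity (i)) and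
`E (u n) + a |C (u n)|^s → ∞` whenever `‖u n‖ → ∞` (coercivity (ii)),
`J_δ u = E u / |C u| + δ (E u + 2 a |C u|^s)` with finite infimum `j`, and
`E u / |C u| ≥ j + η` whenever `C u ≠ 0` and `‖u‖_♯ < r`, every minimizing sequence of
`J_δ` is bounded in `X` and satisfies `‖u n‖_♯ ≥ r` for all sufficiently large `n`. -/
theorem minimizing_seq_bounded_and_sharp_norm_below {X : Type*}
    [NormedAddCommGroup X] [NormedSpace ℝ X] [CompleteSpace X] {l : ℕ}
    (E : X → ℝ) (C : X → EuclideanSpace ℝ (Fin l))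
    (a s : ℝ) (ha : 0 ≤ a) (hs : 1 ≤ s)
    (hcoer₁ : ∀ u : X, 0 ≤ E u + a * ‖C u‖ ^ s)
    (hcoer₂ : ∀ u : ℕ → X, Tendsto (fun n => ‖u n‖) atTop atTop →
      Tendsto (fun n => E (u n) + a * ‖C (u n)‖ ^ s) atTop atTop)
    (p : Seminorm ℝ X) (δ : ℝ) (hδ : 0 < δ)
    (J : X → ℝ)
    (hJ : ∀ u : X, J u = E u / ‖C u‖ + δ * (E u + 2 * a * ‖C u‖ ^ s))
    (j : ℝ) (hj : IsGLB (J '' {u : X | C u ≠ 0}) j)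
    (η r : ℝ) (hη : 0 < η) (hr : 0 < r)
    (hbelow : ∀ u : X, C u ≠ 0 → p u < r → j + η ≤ E u / ‖C u‖) :
    ∀ u : ℕ → X, (∀ n, C (u n) ≠ 0) → Tendsto (fun n => J (u n)) atTop (𝓝 j) →
      (∃ R : ℝ, ∀ n, ‖u n‖ ≤ R) ∧ (∀ᶠ n in atTop, r ≤ p (u n)) :=
  minimizing_seq_bounded_and_sharp_norm_below_general E C a s ha hs hcoer₁ hcoer₂ p δ hδ J hJ j η r
    hη hbelow
end
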